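/- arXiv:2507.14380 — 4 statements merged into one kernel-verified Lean document; each statement's English description precedes it below -/
import Mathlib

section
/- Let A and B be p×p real symmetric positive semidefinite matrices. Suppose A = U·diag(a)·Uᵀ and B = W·diag(b)·Wᵀ with U, W orthogonal matrices, where a : Fin p → ℝ is monotonically increasing and b : Fin p → ℝ is monotonically decreasing. Then tr(A B) ≥ Σ_{i=1}^{p} a_i b_i. -/
open Matrix Finset

/-- Trace inequality: if `A = U diag(a) Uᵀ` and `B = W diag(b) Wᵀ` are positive
semidefinite with `a` increasingly ordered and `b` decreasingly ordered, then
`tr(AB) ≥ ∑ i, a i * b i`. -/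
theorem trace_pairing_inequality {p : ℕ}
    (A B U W : Matrix (Fin p) (Fin p) ℝ)
    (hA : A.PosSemidef) (hB : B.PosSemidef)
    (hU : U ∈ Matrix.orthogonalGroup (Fin p) ℝ)
    (hW : W ∈ Matrix.orthogonalGroup (Fin p) ℝ)
    (a b : Fin p → ℝ)
    (hAeig : A = U * Matrix.diagonal a * Uᵀ)
    (hBeig : B = W * Matrix.diagonal b * Wᵀ)
    (ha : Monotone a) (hb : Antitone b) :
    (A * B).trace ≥ ∑ i, a i * b i := by
  classical
  have hU1 : U * Uᵀ = 1 := by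
    have := (Matrix.mem_orthogonalGroup_iff (Fin p) ℝ).mp hU
    simpa [Matrix.star_eq_conjTranspose, Matrix.conjTranspose_eq_transpose_of_trivial] using this
  have hU2 : Uᵀ * U = 1 := by
    have := (Matrix.mem_orthogonalGroup_iff' (Fin p) ℝ).mp hU
    simpa [Matrix.star_eq_conjTranspose, Matrix.conjTranspose_eq_transpose_of_trivial] using this
  have hW1 : W * Wᵀ = 1 := by
    have := (Matrix.mem_orthogonalGroup_iff (Fin p) ℝ).mp hW
    simpa [Matrix.star_eq_conjTranspose, Matrix.conjTranspose_eq_transpose_of_trivial] using this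
  have hW2 : Wᵀ * W = 1 := by
    have := (Matrix.mem_orthogonalGroup_iff' (Fin p) ℝ).mp hW
    simpa [Matrix.star_eq_conjTranspose, Matrix.conjTranspose_eq_transpose_of_trivial] using this
  set V : Matrix (Fin p) (Fin p) ℝ := Uᵀ * W with hV
  have hV1 : V * Vᵀ = 1 := by
    rw [hV, Matrix.transpose_mul]
    calc Uᵀ * W * (Wᵀ * Uᵀᵀ) = Uᵀ * (W * Wᵀ) * Uᵀᵀ := by noncomm_ring
    _ = 1 := by rw [hW1, Matrix.transpose_transpose, Matrix.mul_one, hU2]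
  have hV2 : Vᵀ * V = 1 := by
    rw [hV, Matrix.transpose_mul]
    calc Wᵀ * Uᵀᵀ * (Uᵀ * W) = Wᵀ * (Uᵀᵀ * Uᵀ) * W := by noncomm_ring
    _ = 1 := by rw [Matrix.transpose_transpose, hU1, Matrix.mul_one, hW2]
  -- trace formula
  have htr : (A * B).trace = ∑ i, ∑ j, a i * b j * (V i j) ^ 2 := by
    have : A * B = U * (Matrix.diagonal a * V * Matrix.diagonal b) * Wᵀ := by
      rw [hAeig, hBeig, hV]; noncomm_ring
    rw [this, Matrix.trace_mul_comm, ← Matrix.mul_assoc]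
    have hWU : Wᵀ * U = Vᵀ := by rw [hV, Matrix.transpose_mul, Matrix.transpose_transpose]
    rw [hWU]
    simp only [Matrix.trace, Matrix.diag_apply, Matrix.mul_apply, Matrix.mul_diagonal,
      Matrix.diagonal_mul, Matrix.transpose_apply]
    rw [Finset.sum_comm]
    exact Finset.sum_congr rfl fun i _ => Finset.sum_congr rfl fun j _ => by
      simp [Matrix.diagonal_apply, ite_mul, zero_mul, mul_ite, mul_zero, Finset.sum_ite_eq,
        Finset.sum_ite_eq', Finset.mul_sum]
      ring
  set Q : Matrix (Fin p) (Fin p) ℝ := fun i j => (V i j) ^ 2 with hQdef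
  have hQ : Q ∈ doublyStochastic ℝ (Fin p) := by
    rw [mem_doublyStochastic_iff_sum]
    refine ⟨fun i j => sq_nonneg _, fun i => ?_, fun j => ?_⟩
    · have h := congrFun (congrFun hV1 i) i
      simp only [Matrix.mul_apply, Matrix.transpose_apply, Matrix.one_apply_eq] at h
      simpa [hQdef, sq] using h
    · have h := congrFun (congrFun hV2 j) j
      simp only [Matrix.mul_apply, Matrix.transpose_apply, Matrix.one_apply_eq] at h
      simpa [hQdef, sq] using h
  obtain ⟨w, hw0, hw1, hwQ⟩ := exists_eq_sum_perm_of_mem_doublyStochastic hQ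
  have hQentry : ∀ i j, Q i j = ∑ σ : Equiv.Perm (Fin p), w σ * (if σ i = j then 1 else 0) := by
    intro i j
    have h : (∑ σ : Equiv.Perm (Fin p), w σ • σ.permMatrix ℝ) i j = Q i j := by rw [hwQ]
    rw [Matrix.sum_apply] at h
    simp only [Matrix.smul_apply, smul_eq_mul] at h
    rw [← h]
    refine Finset.sum_congr rfl fun σ _ => ?_
    congr 1
    simp [Equiv.Perm.permMatrix, PEquiv.toMatrix_apply, Equiv.toPEquiv_apply, eq_comm]
  have hav : Antivary a b := ha.antivary hb
  rw [htr, ge_iff_le]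
  calc ∑ i, a i * b i = ∑ σ : Equiv.Perm (Fin p), w σ * ∑ i, a i * b i := by
        rw [← Finset.sum_mul, hw1, one_mul]
    _ ≤ ∑ σ : Equiv.Perm (Fin p), w σ * ∑ i, a i * b (σ i) := by
        refine Finset.sum_le_sum fun σ _ => mul_le_mul_of_nonneg_left ?_ (hw0 σ)
        simpa [smul_eq_mul] using hav.sum_smul_le_sum_smul_comp_perm (σ := σ)
    _ = ∑ i, ∑ j, a i * b j * Q i j := by
        simp_rw [hQentry, Finset.mul_sum]
        rw [Finset.sum_comm]
        refine Finset.sum_congr rfl fun i _ => ?_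
        rw [Finset.sum_comm]
        refine Finset.sum_congr rfl fun σ _ => ?_
        simp only [mul_ite, mul_one, mul_zero, Finset.sum_ite_eq, Finset.mem_univ, if_true]
        ring
end

section
/- Let Ψ be a p×p real positive definite diagonal matrix, let S be a p×p real symmetric positive semidefinite matrix, and set G = Ψ^{-1/2} S Ψ^{-1/2}. Suppose G = V·diag(θ)·Vᵀ with V orthogonal and θ : Fin p → ℝ monotonically decreasing, θ_j ≥ 0 for all j. Fix q < p, let V₁ be the p×q matrix of the first q columns of V, and let Δ be the q×q diagonal matrix with j-th diagonal entry √(max(θ_j − 1, 0)). Define Λ̂ = Ψ^{1/2} V₁ Δ. Then for every p×q real matrix Λ, log det(ΛΛᵀ + Ψ) + tr((ΛΛᵀ + Ψ)⁻¹ S) ≥ log det(Λ̂Λ̂ᵀ + Ψ) + tr((Λ̂Λ̂ᵀ + Ψ)⁻¹ S). -/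
/-!
Whitening by `Ψh`: with `M = Ψh⁻¹ Λ` the objective is `log det Ψ + log det B + tr (B⁻¹ G)` for
`B = M Mᵀ + 1`, and `B = U diag(d) Uᵀ` with `U` orthogonal, all `d i ≥ 1`, and `d i ≠ 1` for at
most `q` indices because `rank M ≤ q`. In this basis the loss is
`∑ i j, P i j * (log (d i) + θ j / d i)` for the doubly stochastic `P i j = ((Uᵀ V) i j)²`, so by
Birkhoff's theorem it suffices to treat permutation matrices. There each term is at least
`θ (σ i)` minus the gap `θ - min_{a ≥ 1} (log a + θ / a)`, and only the at most `q` terms with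
`d i ≠ 1` lose it. The gap is nondecreasing in `θ`, so the total loss is largest when it falls on
the `q` largest eigenvalues, which is exactly the value attained at `Λhat`.
-/

open Matrix Finset

lemma le_sum_mul_of_mem_doublyStochastic {n R : Type*} [Fintype n] [DecidableEq n] [Field R]
    [LinearOrder R] [IsStrictOrderedRing R] {P : Matrix n n R} (hP : P ∈ doublyStochastic R n)
    (w : n → n → R) {r : R} (hperm : ∀ σ : Equiv.Perm n, r ≤ ∑ i, w i (σ i)) :
    r ≤ ∑ i, ∑ j, P i j * w i j := by
  have hlin : IsLinearMap R fun Q : Matrix n n R => ∑ i, ∑ j, Q i j * w i j :=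
    ⟨fun Q Q' => by simp only [Matrix.add_apply, add_mul, sum_add_distrib],
     fun c Q => by simp only [Matrix.smul_apply, smul_eq_mul, mul_assoc, mul_sum]⟩
  rw [← SetLike.mem_coe, doublyStochastic_eq_convexHull_permMatrix] at hP
  refine convexHull_min ?_ (convex_halfSpace_ge hlin r) hP
  rintro _ ⟨σ, rfl⟩
  simpa [Equiv.toPEquiv_apply, PEquiv.toMatrix_apply] using hperm σ

lemma Finset.sum_le_sum_Iio_of_antitone {ι M : Type*} [LinearOrder ι] [LocallyFiniteOrderBot ι]
    [AddCommMonoid M] [PartialOrder M] [IsOrderedAddMonoid M] {f : ι → M} (hf : Antitone f)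
    {a : ι} (ha : 0 ≤ f a) {K : Finset ι} (hK : #K ≤ #(Iio a)) :
    ∑ i ∈ K, f i ≤ ∑ i ∈ Iio a, f i := by
  have hout : ∑ i ∈ K \ Iio a, f i ≤ ∑ i ∈ Iio a \ K, f i :=
    calc ∑ i ∈ K \ Iio a, f i ≤ #(K \ Iio a) • f a :=
          sum_le_card_nsmul _ _ _ fun i hi => hf (not_lt.1 (mt mem_Iio.2 (mem_sdiff.1 hi).2))
      _ ≤ #(Iio a \ K) • f a := nsmul_le_nsmul_left ha (card_sdiff_le_card_sdiff_iff.2 hK)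
      _ ≤ ∑ i ∈ Iio a \ K, f i :=
          card_nsmul_le_sum _ _ _ fun i hi => hf (mem_Iio.1 (mem_sdiff.1 hi).1).le
  rw [← sum_sdiff (inter_subset_left (s₁ := K) (s₂ := Iio a)),
    ← sum_sdiff (inter_subset_right (s₁ := K) (s₂ := Iio a)), sdiff_inter_self_left,
    sdiff_inter_self_right]
  exact add_le_add_left hout _

/-- `min_{a ≥ 1} (log a + x / a)`, attained at `a = max x 1`. -/
noncomputable def minLogAddDiv (x : ℝ) : ℝ := Real.log (max x 1) + x / max x 1

lemma minLogAddDiv_le (x : ℝ) {a : ℝ} (ha : 1 ≤ a) :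
    minLogAddDiv x ≤ Real.log a + x / a := by
  have ha0 : 0 < a := one_pos.trans_le ha
  rcases le_total x 1 with hx | hx
  · have hlog : 1 - a⁻¹ ≤ Real.log a := Real.one_sub_inv_le_log_of_pos ha0
    have hinv : a⁻¹ ≤ 1 := inv_le_one_of_one_le₀ ha
    rw [minLogAddDiv, max_eq_right hx, Real.log_one, div_one, zero_add, div_eq_mul_inv]
    nlinarith
  · have hx0 : 0 < x := one_pos.trans_le hx
    have hlog : 1 - x / a ≤ Real.log a - Real.log x := by
      simpa [Real.log_div ha0.ne' hx0.ne'] using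
        Real.one_sub_inv_le_log_of_pos (div_pos ha0 hx0)
    rw [minLogAddDiv, max_eq_left hx, div_self hx0.ne']
    linarith

lemma minLogAddDiv_le_self (x : ℝ) : minLogAddDiv x ≤ x := by
  simpa using minLogAddDiv_le x le_rfl

lemma monotone_sub_minLogAddDiv : Monotone fun x => x - minLogAddDiv x := by
  have hlow : ∀ x ≤ 1, x - minLogAddDiv x = 0 := fun x hx => by
    simp [minLogAddDiv, max_eq_right hx]
  have hhigh : ∀ x, 1 ≤ x → x - minLogAddDiv x = x - 1 - Real.log x := fun x hx => by
    rw [minLogAddDiv, max_eq_left hx, div_self (one_pos.trans_le hx).ne']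
    ring
  intro x y hxy
  dsimp only
  rcases le_total y 1 with hy | hy
  · rw [hlow x (hxy.trans hy), hlow y hy]
  rw [hhigh y hy]
  rcases le_total x 1 with hx | hx
  · rw [hlow x hx]
    linarith [Real.log_le_sub_one_of_pos (one_pos.trans_le hy)]
  · have hx0 : 0 < x := one_pos.trans_le hx
    have hlog : Real.log y - Real.log x ≤ y / x - 1 := by
      rw [← Real.log_div (by positivity) hx0.ne']
      exact Real.log_le_sub_one_of_pos (by positivity)
    have hdiv : y / x - 1 ≤ y - x := by
      rw [div_sub_one hx0.ne', div_le_iff₀ hx0]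
      nlinarith
    rw [hhigh x hx]
    linarith

section Algebra

variable {n : Type*} [Fintype n] [DecidableEq n] {R : Type*}

lemma mul_diagonal_mul_transpose_apply {l m : Type*} [Semiring R] (A : Matrix l n R) (c : n → R)
    (B : Matrix m n R) (i : l) (k : m) :
    (A * diagonal c * Bᵀ) i k = ∑ j, A i j * c j * B k j := by
  rw [mul_apply]
  simp only [mul_diagonal, transpose_apply]

lemma trace_diagonal_mul_conj_diagonal [CommSemiring R] (c θ : n → R) (O : Matrix n n R) :
    (diagonal c * (O * diagonal θ * Oᵀ)).trace = ∑ i, ∑ j, O i j ^ 2 * (c i * θ j) := by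
  simp only [trace, diag_apply, diagonal_mul, mul_diagonal_mul_transpose_apply, mul_sum]
  refine sum_congr rfl fun i _ => sum_congr rfl fun j _ => ?_
  ring

variable [CommRing R] {U V O : Matrix n n R}

lemma sum_sq_apply_of_mem_orthogonalGroup (hO : O ∈ orthogonalGroup n R) (i : n) :
    ∑ j, O i j ^ 2 = 1 := by
  simpa [mul_apply, sq] using congrFun₂ ((mem_orthogonalGroup_iff n R).1 hO) i i

lemma sum_sq_apply_of_mem_orthogonalGroup' (hO : O ∈ orthogonalGroup n R) (j : n) :
    ∑ i, O i j ^ 2 = 1 := by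
  simpa [mul_apply, sq] using congrFun₂ ((mem_orthogonalGroup_iff' n R).1 hO) j j

lemma transpose_mul_mem_orthogonalGroup (hU : U ∈ orthogonalGroup n R)
    (hV : V ∈ orthogonalGroup n R) : Uᵀ * V ∈ orthogonalGroup n R := by
  rw [mem_orthogonalGroup_iff, transpose_mul, transpose_transpose, Matrix.mul_assoc,
    ← Matrix.mul_assoc V, (mem_orthogonalGroup_iff n R).1 hV, Matrix.one_mul,
    (mem_orthogonalGroup_iff' n R).1 hU]

lemma det_conj_diagonal (hU : U ∈ orthogonalGroup n R) (d : n → R) :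
    (U * diagonal d * Uᵀ).det = ∏ i, d i := by
  rw [det_conj_of_mul_eq_one ((mem_orthogonalGroup_iff n R).1 hU)
    ((mem_orthogonalGroup_iff' n R).1 hU), det_diagonal]

lemma conj_diagonal_add_one (hU : U ∈ orthogonalGroup n R) (d : n → R) :
    U * diagonal d * Uᵀ + 1 = U * diagonal (d + 1) * Uᵀ := by
  rw [show diagonal (d + 1) = diagonal d + 1 by rw [← diagonal_one, diagonal_add]; rfl,
    Matrix.mul_add, Matrix.add_mul, Matrix.mul_one, (mem_orthogonalGroup_iff n R).1 hU]

end Algebra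

lemma inv_conj_diagonal {n K : Type*} [Fintype n] [DecidableEq n] [Field K] {U : Matrix n n K}
    (hU : U ∈ orthogonalGroup n K) {d : n → K} (hd : ∀ i, d i ≠ 0) :
    (U * diagonal d * Uᵀ)⁻¹ = U * diagonal d⁻¹ * Uᵀ := by
  refine inv_eq_right_inv ?_
  have hdd : diagonal d * diagonal d⁻¹ = 1 := by
    rw [diagonal_mul_diagonal, ← diagonal_one]
    exact congrArg diagonal (funext fun i => mul_inv_cancel₀ (hd i))
  calc U * diagonal d * Uᵀ * (U * diagonal d⁻¹ * Uᵀ)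
      = U * diagonal d * (Uᵀ * U) * diagonal d⁻¹ * Uᵀ := by simp only [Matrix.mul_assoc]
    _ = 1 := by
      rw [(mem_orthogonalGroup_iff' n K).1 hU, Matrix.mul_one, Matrix.mul_assoc U, hdd,
        Matrix.mul_one, (mem_orthogonalGroup_iff n K).1 hU]

lemma of_sq_mem_doublyStochastic {n : Type*} [Fintype n] [DecidableEq n] {O : Matrix n n ℝ}
    (hO : O ∈ orthogonalGroup n ℝ) : of (fun i j => O i j ^ 2) ∈ doublyStochastic ℝ n :=
  mem_doublyStochastic_iff_sum.2 ⟨fun _ _ => sq_nonneg _,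
    sum_sq_apply_of_mem_orthogonalGroup hO, sum_sq_apply_of_mem_orthogonalGroup' hO⟩

noncomputable def logDetLoss {n : Type*} [Fintype n] [DecidableEq n] (S C : Matrix n n ℝ) : ℝ :=
  Real.log C.det + (C⁻¹ * S).trace

lemma logDetLoss_conj_diagonal {n : Type*} [Fintype n] [DecidableEq n] {U V : Matrix n n ℝ}
    (hU : U ∈ orthogonalGroup n ℝ) (hV : V ∈ orthogonalGroup n ℝ)
    (θ : n → ℝ) {d : n → ℝ} (hd : ∀ i, d i ≠ 0) :
    logDetLoss (V * diagonal θ * Vᵀ) (U * diagonal d * Uᵀ)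
      = ∑ i, ∑ j, (Uᵀ * V) i j ^ 2 * (Real.log (d i) + θ j / d i) := by
  have hO := transpose_mul_mem_orthogonalGroup hU hV
  have htrace : (U * diagonal d⁻¹ * Uᵀ * (V * diagonal θ * Vᵀ)).trace
      = (diagonal d⁻¹ * ((Uᵀ * V) * diagonal θ * (Uᵀ * V)ᵀ)).trace :=
    calc _ = (U * (diagonal d⁻¹ * Uᵀ * V * diagonal θ * Vᵀ)).trace := by
          simp only [Matrix.mul_assoc]
      _ = (diagonal d⁻¹ * Uᵀ * V * diagonal θ * Vᵀ * U).trace := trace_mul_comm _ _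
      _ = _ := by rw [transpose_mul, transpose_transpose]; simp only [Matrix.mul_assoc]
  have hlog : ∑ i, Real.log (d i) = ∑ i, ∑ j, (Uᵀ * V) i j ^ 2 * Real.log (d i) := by
    simp only [← sum_mul, sum_sq_apply_of_mem_orthogonalGroup hO, one_mul]
  rw [logDetLoss, det_conj_diagonal hU, Real.log_prod fun i _ => hd i, inv_conj_diagonal hU hd,
    htrace, trace_diagonal_mul_conj_diagonal, hlog, ← sum_add_distrib]
  refine sum_congr rfl fun i _ => ?_
  rw [← sum_add_distrib]
  refine sum_congr rfl fun j _ => ?_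
  rw [Pi.inv_apply, div_eq_inv_mul]
  ring

lemma exists_mul_transpose_add_one_eq_conj_diagonal {n m : Type*} [Fintype n] [DecidableEq n]
    [Fintype m] (M : Matrix n m ℝ) :
    ∃ U ∈ orthogonalGroup n ℝ, ∃ d : n → ℝ, (∀ i, 1 ≤ d i) ∧
      #(univ.filter fun i => d i ≠ 1) ≤ Fintype.card m ∧
      M * Mᵀ + 1 = U * diagonal d * Uᵀ := by
  have hM : (M * Mᵀ).PosSemidef := by simpa using posSemidef_self_mul_conjTranspose M
  set U : Matrix n n ℝ := (hM.1.eigenvectorUnitary : Matrix n n ℝ)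
  have hU : U ∈ orthogonalGroup n ℝ := hM.1.eigenvectorUnitary.2
  refine ⟨U, hU, hM.1.eigenvalues + 1, fun i => by simpa using hM.eigenvalues_nonneg i, ?_, ?_⟩
  · calc #(univ.filter fun i => (hM.1.eigenvalues + 1) i ≠ 1)
        = Fintype.card {i // hM.1.eigenvalues i ≠ 0} := by
          rw [Fintype.card_subtype]; simp
      _ = (M * Mᵀ).rank := hM.1.rank_eq_card_non_zero_eigs.symm
      _ ≤ M.rank := rank_mul_le_left M Mᵀ
      _ ≤ Fintype.card m := rank_le_card_width M
  · rw [← conj_diagonal_add_one hU]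
    congr 1
    simpa [Unitary.conjStarAlgAut_apply, star_eq_conjTranspose] using hM.1.spectral_theorem

lemma logDetLoss_mul_transpose_add_mul_transpose {n m : Type*} [Fintype n] [DecidableEq n]
    [Fintype m] {A : Matrix n n ℝ} (hA : IsUnit A.det) (Λ : Matrix n m ℝ)
    (S : Matrix n n ℝ) :
    logDetLoss S (Λ * Λᵀ + A * Aᵀ)
      = Real.log (A * Aᵀ).det
        + logDetLoss (A⁻¹ * S * Aᵀ⁻¹) ((A⁻¹ * Λ) * (A⁻¹ * Λ)ᵀ + 1) := by
  set B := (A⁻¹ * Λ) * (A⁻¹ * Λ)ᵀ + 1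
  have hpsd : ((A⁻¹ * Λ) * (A⁻¹ * Λ)ᵀ).PosSemidef := by
    simpa using posSemidef_self_mul_conjTranspose (A⁻¹ * Λ)
  have hB : B.det ≠ 0 := (PosDef.posSemidef_add hpsd PosDef.one).det_pos.ne'
  have hAt : IsUnit Aᵀ.det := by rwa [det_transpose]
  have hfact : Λ * Λᵀ + A * Aᵀ = A * B * Aᵀ := by
    rw [Matrix.mul_add, Matrix.add_mul, Matrix.mul_one, transpose_mul, ← Matrix.mul_assoc,
      mul_nonsing_inv_cancel_left _ _ hA, Matrix.mul_assoc, transpose_nonsing_inv,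
      nonsing_inv_mul_cancel_right _ _ hAt]
  have htrace : ((A * B * Aᵀ)⁻¹ * S).trace = (B⁻¹ * (A⁻¹ * S * Aᵀ⁻¹)).trace := by
    rw [Matrix.mul_inv_rev, Matrix.mul_inv_rev, Matrix.mul_assoc, Matrix.mul_assoc, trace_mul_comm]
    simp only [Matrix.mul_assoc]
  rw [logDetLoss, logDetLoss, hfact, htrace, det_mul, det_mul, det_mul,
    Real.log_mul (mul_ne_zero hA.ne_zero hB) hAt.ne_zero, Real.log_mul hA.ne_zero hB,
    Real.log_mul hA.ne_zero hAt.ne_zero]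
  ring

section Profile

variable {n : Type*} [Fintype n] [LinearOrder n] [LocallyFiniteOrderBot n] {θ d : n → ℝ}

lemma sum_sub_sum_Iio_le_sum_log_add_div (hθ : Antitone θ) (hd : ∀ i, 1 ≤ d i) {a : n}
    (hcard : #(univ.filter fun i => d i ≠ 1) ≤ #(Iio a)) (σ : Equiv.Perm n) :
    ∑ j, θ j - ∑ j ∈ Iio a, (θ j - minLogAddDiv (θ j))
      ≤ ∑ i, (Real.log (d i) + θ (σ i) / d i) := by
  set gap : ℝ → ℝ := fun x => x - minLogAddDiv x
  set J := univ.filter fun i => d i ≠ 1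
  have hgap : 0 ≤ gap (θ a) := sub_nonneg.2 (minLogAddDiv_le_self _)
  have hJ : ∑ i ∈ J, gap (θ (σ i)) ≤ ∑ j ∈ Iio a, gap (θ j) :=
    calc ∑ i ∈ J, gap (θ (σ i)) = ∑ j ∈ J.map σ.toEmbedding, gap (θ j) := by
          rw [sum_map]; rfl
      _ ≤ _ := sum_le_sum_Iio_of_antitone (monotone_sub_minLogAddDiv.comp_antitone hθ) hgap
        (by rwa [card_map])
  have hterm : ∀ i, θ (σ i) - (if i ∈ J then gap (θ (σ i)) else 0)
      ≤ Real.log (d i) + θ (σ i) / d i := fun i => by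
    by_cases hi : d i = 1
    · simp [J, hi]
    · simpa [J, hi, gap] using minLogAddDiv_le (θ (σ i)) (hd i)
  calc ∑ j, θ j - ∑ j ∈ Iio a, gap (θ j)
      ≤ ∑ i, θ (σ i) - ∑ i ∈ J, gap (θ (σ i)) := by rw [Equiv.sum_comp]; linarith
    _ = ∑ i, (θ (σ i) - if i ∈ J then gap (θ (σ i)) else 0) := by
      rw [← Fintype.sum_ite_mem J fun i => gap (θ (σ i)), ← sum_sub_distrib]
    _ ≤ _ := sum_le_sum fun i _ => hterm i

lemma le_logDetLoss_conj_diagonal {U V : Matrix n n ℝ} (hU : U ∈ orthogonalGroup n ℝ)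
    (hV : V ∈ orthogonalGroup n ℝ) (hθ : Antitone θ) (hd : ∀ i, 1 ≤ d i) {a : n}
    (hcard : #(univ.filter fun i => d i ≠ 1) ≤ #(Iio a)) :
    ∑ j, θ j - ∑ j ∈ Iio a, (θ j - minLogAddDiv (θ j))
      ≤ logDetLoss (V * diagonal θ * Vᵀ) (U * diagonal d * Uᵀ) := by
  rw [logDetLoss_conj_diagonal hU hV θ fun i => (one_pos.trans_le (hd i)).ne']
  exact le_sum_mul_of_mem_doublyStochastic
    (of_sq_mem_doublyStochastic (transpose_mul_mem_orthogonalGroup hU hV)) _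
    (sum_sub_sum_Iio_le_sum_log_add_div hθ hd hcard)

lemma logDetLoss_conj_diagonal_max_one {V : Matrix n n ℝ} (hV : V ∈ orthogonalGroup n ℝ)
    (θ : n → ℝ) (a : n) :
    logDetLoss (V * diagonal θ * Vᵀ)
        (V * diagonal (fun j => if j ∈ Iio a then max (θ j) 1 else 1) * Vᵀ)
      = ∑ j, θ j - ∑ j ∈ Iio a, (θ j - minLogAddDiv (θ j)) := by
  rw [logDetLoss_conj_diagonal hV hV θ fun j => by split_ifs <;> positivity,
    (mem_orthogonalGroup_iff' n ℝ).1 hV,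
    ← Fintype.sum_ite_mem (Iio a) fun j => θ j - minLogAddDiv (θ j), ← sum_sub_distrib]
  refine sum_congr rfl fun j _ => ?_
  simp only [one_apply, ite_pow, one_pow, zero_pow two_ne_zero, ite_mul, one_mul, zero_mul,
    sum_ite_eq, mem_univ, if_true]
  split_ifs <;> simp [minLogAddDiv]

end Profile

lemma loadings_mul_transpose_add_one {p q : ℕ} (hq : q < p) {V : Matrix (Fin p) (Fin p) ℝ}
    (hV : V ∈ orthogonalGroup (Fin p) ℝ) (θ : Fin p → ℝ)
    {V₁ : Matrix (Fin p) (Fin q) ℝ} (hV₁ : V₁ = of fun i j => V i (Fin.castLE hq.le j))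
    {Δ : Matrix (Fin q) (Fin q) ℝ}
    (hΔ : Δ = diagonal fun j => Real.sqrt (max (θ (Fin.castLE hq.le j) - 1) 0)) :
    (V₁ * Δ) * (V₁ * Δ)ᵀ + 1
      = V * diagonal (fun j => if j ∈ Iio ⟨q, hq⟩ then max (θ j) 1 else 1) * Vᵀ := by
  have hΔsq : (V₁ * Δ) * (V₁ * Δ)ᵀ
      = V₁ * diagonal (fun j => max (θ (Fin.castLE hq.le j) - 1) 0) * V₁ᵀ := by
    rw [hΔ, transpose_mul, diagonal_transpose, Matrix.mul_assoc, ← Matrix.mul_assoc (diagonal _),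
      diagonal_mul_diagonal, ← Matrix.mul_assoc]
    simp only [Real.mul_self_sqrt (le_max_right _ _)]
  have hsq : (V₁ * Δ) * (V₁ * Δ)ᵀ
      = V * diagonal (fun j => if j ∈ Iio ⟨q, hq⟩ then max (θ j - 1) 0 else 0) * Vᵀ := by
    ext i k
    rw [hΔsq, mul_diagonal_mul_transpose_apply, mul_diagonal_mul_transpose_apply]
    refine Fintype.sum_of_injective _ (Fin.castLE_injective hq.le) _ _ (fun j hj => ?_) fun j => ?_
    · have hjq : j ∉ Iio (⟨q, hq⟩ : Fin p) := fun hjq =>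
        hj ⟨⟨j, (mem_Iio.1 hjq : j < ⟨q, hq⟩)⟩, rfl⟩
      rw [if_neg hjq, mul_zero, zero_mul]
    · have hjq : Fin.castLE hq.le j ∈ Iio (⟨q, hq⟩ : Fin p) := mem_Iio.2 j.isLt
      rw [if_pos hjq, hV₁]
      rfl
  rw [hsq, conj_diagonal_add_one hV]
  congr 3
  funext j
  rw [Pi.add_apply, Pi.one_apply]
  split_ifs
  · rw [← max_add_add_right, sub_add_cancel, zero_add]
  · rw [zero_add]

theorem profile_loading_optimal_general {p q : ℕ} (hq : q < p)
    (Ψ Ψh S : Matrix (Fin p) (Fin p) ℝ)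
    (hΨh : Ψh.PosDef) (hΨhsq : Ψh * Ψh = Ψ)
    (G : Matrix (Fin p) (Fin p) ℝ) (hG : G = Ψh⁻¹ * S * Ψh⁻¹)
    (V : Matrix (Fin p) (Fin p) ℝ) (hV : V ∈ Matrix.orthogonalGroup (Fin p) ℝ)
    (θ : Fin p → ℝ) (hθdec : Antitone θ)
    (hGeig : G = V * Matrix.diagonal θ * Vᵀ)
    (V₁ : Matrix (Fin p) (Fin q) ℝ)
    (hV₁ : V₁ = Matrix.of fun i j => V i (Fin.castLE hq.le j))
    (Δ : Matrix (Fin q) (Fin q) ℝ)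
    (hΔ : Δ = Matrix.diagonal fun j => Real.sqrt (max (θ (Fin.castLE hq.le j) - 1) 0))
    (Λhat : Matrix (Fin p) (Fin q) ℝ) (hΛhat : Λhat = Ψh * V₁ * Δ) :
    ∀ Λ : Matrix (Fin p) (Fin q) ℝ,
      Real.log (Λ * Λᵀ + Ψ).det + ((Λ * Λᵀ + Ψ)⁻¹ * S).trace
        ≥ Real.log (Λhat * Λhatᵀ + Ψ).det + ((Λhat * Λhatᵀ + Ψ)⁻¹ * S).trace := by
  intro Λ
  have hΨhsymm : Ψh.IsSymm := by simpa using hΨh.1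
  have hunit : IsUnit Ψh.det := hΨh.det_pos.ne'.isUnit
  have hwhiten : ∀ L : Matrix (Fin p) (Fin q) ℝ,
      Real.log (L * Lᵀ + Ψ).det + ((L * Lᵀ + Ψ)⁻¹ * S).trace
        = Real.log Ψ.det + logDetLoss G ((Ψh⁻¹ * L) * (Ψh⁻¹ * L)ᵀ + 1) := fun L => by
    have h := logDetLoss_mul_transpose_add_mul_transpose hunit L S
    rwa [hΨhsymm.eq, hΨhsq, ← hG] at h
  have hΛhat' : Ψh⁻¹ * Λhat = V₁ * Δ := by
    rw [hΛhat, Matrix.mul_assoc, nonsing_inv_mul_cancel_left _ _ hunit]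
  obtain ⟨U, hU, d, hd, hcard, hUd⟩ :=
    exists_mul_transpose_add_one_eq_conj_diagonal (Ψh⁻¹ * Λ)
  rw [ge_iff_le, hwhiten, hwhiten, hUd, hΛhat', loadings_mul_transpose_add_one hq hV θ hV₁ hΔ,
    hGeig, logDetLoss_conj_diagonal_max_one hV]
  refine (add_le_add_iff_left _).2 (le_logDetLoss_conj_diagonal hU hV hθdec hd ?_)
  simpa using hcard

/-- Result 1 (optimality): with `G = Ψ^{-1/2} S Ψ^{-1/2} = V diag(θ) Vᵀ`, `θ` decreasing
and nonnegative, `q < p`, `V₁` the first `q` columns of `V`, `Δ = diag(√(max(θ_j − 1, 0)))`,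
the loading matrix `Λ̂ = Ψ^{1/2} V₁ Δ` minimizes
`Λ ↦ log det(ΛΛᵀ + Ψ) + tr((ΛΛᵀ + Ψ)⁻¹ S)`. -/
theorem profile_loading_optimal {p q : ℕ} (hq : q < p)
    (Ψ Ψh S : Matrix (Fin p) (Fin p) ℝ)
    (hΨ : Ψ.PosDef) (hΨdiag : Ψ.IsDiag)
    (hΨh : Ψh.PosDef) (hΨhsq : Ψh * Ψh = Ψ)
    (hS : S.PosSemidef)
    (G : Matrix (Fin p) (Fin p) ℝ) (hG : G = Ψh⁻¹ * S * Ψh⁻¹)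
    (V : Matrix (Fin p) (Fin p) ℝ) (hV : V ∈ Matrix.orthogonalGroup (Fin p) ℝ)
    (θ : Fin p → ℝ) (hθdec : Antitone θ) (hθnonneg : ∀ j, 0 ≤ θ j)
    (hGeig : G = V * Matrix.diagonal θ * Vᵀ)
    (V₁ : Matrix (Fin p) (Fin q) ℝ)
    (hV₁ : V₁ = Matrix.of fun i j => V i (Fin.castLE hq.le j))
    (Δ : Matrix (Fin q) (Fin q) ℝ)
    (hΔ : Δ = Matrix.diagonal fun j => Real.sqrt (max (θ (Fin.castLE hq.le j) - 1) 0))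
    (Λhat : Matrix (Fin p) (Fin q) ℝ) (hΛhat : Λhat = Ψh * V₁ * Δ) :
    ∀ Λ : Matrix (Fin p) (Fin q) ℝ,
      Real.log (Λ * Λᵀ + Ψ).det + ((Λ * Λᵀ + Ψ)⁻¹ * S).trace
        ≥ Real.log (Λhat * Λhatᵀ + Ψ).det + ((Λhat * Λhatᵀ + Ψ)⁻¹ * S).trace :=
  profile_loading_optimal_general hq Ψ Ψh S hΨh hΨhsq G hG V hV θ hθdec hGeig V₁ hV₁ Δ hΔ Λhat hΛhat
end

section
/- Let Ψ be a p×p real positive definite diagonal matrix, let S be a p×p real symmetric positive semidefinite matrix, and set G = Ψ^{-1/2} S Ψ^{-1/2}. Suppose G = V·diag(θ)·Vᵀ with V orthogonal and θ : Fin p → ℝ monotonically decreasing. Fix q < p and assume θ_q ≥ 1. With V₁ the first q columns of V, Δ = diag(√(θ_j − 1)) (j = 1,…,q), and Λ̂ = Ψ^{1/2} V₁ Δ, one has log det(Λ̂Λ̂ᵀ + Ψ) + tr((Λ̂Λ̂ᵀ + Ψ)⁻¹ S) = log det Ψ + tr(Ψ⁻¹ S) + Σ_{j=1}^{q} (log θ_j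 − θ_j + 1). -/
/-!
Write `e : Fin q → Fin p` for the inclusion of the leading indices and `d = extend e (θ ∘ e) 1`,
i.e. `d = (θ₁, …, θ_q, 1, …, 1)`. Since `Δ² = diag(θ_j − 1)`, the fitted covariance is
`Λ̂Λ̂ᵀ + Ψ = Ψ^{1/2} (V diag(d) Vᵀ) Ψ^{1/2}`. Hence its determinant is `det Ψ · ∏_{j≤q} θ_j`, and
`tr((Λ̂Λ̂ᵀ + Ψ)⁻¹ S) = tr(V diag(d)⁻¹ Vᵀ G) = ∑ θ_i / d_i = tr G − ∑_{j≤q} (θ_j − 1)`,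
while `tr(Ψ⁻¹ S) = tr G`.
-/

open Matrix Function

namespace Matrix

section Orthogonal

variable {ι R : Type*} [Fintype ι] [DecidableEq ι] [CommRing R]
  {V : Matrix ι ι R} (hV : V ∈ orthogonalGroup ι R)
include hV

lemma inv_conj_of_mem_orthogonalGroup (A : Matrix ι ι R) :
    (V * A * Vᵀ)⁻¹ = V * A⁻¹ * Vᵀ := by
  have hVinv : V⁻¹ = Vᵀ := inv_eq_left_inv ((mem_orthogonalGroup_iff' ι R).mp hV)
  have hVTinv : Vᵀ⁻¹ = V := inv_eq_left_inv ((mem_orthogonalGroup_iff ι R).mp hV)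
  rw [mul_inv_rev, mul_inv_rev, hVinv, hVTinv, Matrix.mul_assoc]

lemma det_conj_of_mem_orthogonalGroup (A : Matrix ι ι R) : (V * A * Vᵀ).det = A.det := by
  have hdet : V.det * V.det = 1 := by
    simpa using congrArg det ((mem_orthogonalGroup_iff ι R).mp hV)
  rw [det_mul, det_mul, det_transpose, mul_right_comm, mul_assoc, ← mul_assoc, hdet, one_mul]

lemma conj_mul_conj_of_mem_orthogonalGroup (A B : Matrix ι ι R) :
    V * A * Vᵀ * (V * B * Vᵀ) = V * (A * B) * Vᵀ := by
  have hVTV : Vᵀ * V = 1 := (mem_orthogonalGroup_iff' ι R).mp hV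
  simp only [Matrix.mul_assoc]
  rw [← Matrix.mul_assoc Vᵀ, hVTV, Matrix.one_mul]

lemma trace_conj_of_mem_orthogonalGroup (A : Matrix ι ι R) : (V * A * Vᵀ).trace = A.trace := by
  rw [Matrix.mul_assoc, trace_mul_comm, Matrix.mul_assoc, (mem_orthogonalGroup_iff' ι R).mp hV,
    Matrix.mul_one]

end Orthogonal

lemma trace_inv_conj_mul {ι R : Type*} [Fintype ι] [DecidableEq ι] [CommRing R]
    (P A S : Matrix ι ι R) : ((P * A * P)⁻¹ * S).trace = (A⁻¹ * (P⁻¹ * S * P⁻¹)).trace := by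
  rw [mul_inv_rev, mul_inv_rev, Matrix.mul_assoc, trace_mul_comm]
  simp only [Matrix.mul_assoc]

lemma submatrix_mul_diagonal_mul_transpose {m ι κ R : Type*} [Fintype ι] [Fintype κ]
    [DecidableEq ι] [DecidableEq κ] [CommSemiring R] (V : Matrix m ι R) {e : κ → ι}
    (he : Injective e) (c : κ → R) :
    V.submatrix id e * diagonal c * (V.submatrix id e)ᵀ = V * diagonal (extend e c 0) * Vᵀ := by
  ext i k
  rw [mul_apply, mul_apply]
  simp only [mul_diagonal, transpose_apply, submatrix_apply, id]
  refine Fintype.sum_of_injective e he _ _ (fun j hj => ?_) (fun j => by rw [he.extend_apply])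
  rw [extend_apply' _ _ _ (by simpa using hj), Pi.zero_apply, mul_zero, zero_mul]

lemma inv_diagonal_of_ne_zero {ι K : Type*} [Fintype ι] [DecidableEq ι] [Field K] {d : ι → K}
    (hd : ∀ i, d i ≠ 0) : (diagonal d)⁻¹ = diagonal d⁻¹ := by
  refine inv_eq_left_inv ?_
  rw [diagonal_mul_diagonal, ← diagonal_one]
  exact congrArg diagonal (funext fun i => inv_mul_cancel₀ (hd i))

lemma trace_inv_sandwich_conj_diagonal_mul {ι K : Type*} [Fintype ι] [DecidableEq ι] [Field K]
    {P V S : Matrix ι ι K} (hV : V ∈ orthogonalGroup ι K) {θ d : ι → K} (hd : ∀ i, d i ≠ 0)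
    (hG : P⁻¹ * S * P⁻¹ = V * diagonal θ * Vᵀ) :
    ((P * (V * diagonal d * Vᵀ) * P)⁻¹ * S).trace = ∑ i, θ i / d i := by
  rw [trace_inv_conj_mul, hG, inv_conj_of_mem_orthogonalGroup hV,
    conj_mul_conj_of_mem_orthogonalGroup hV, trace_conj_of_mem_orthogonalGroup hV,
    inv_diagonal_of_ne_zero hd, diagonal_mul_diagonal, trace_diagonal]
  simp only [Pi.inv_apply, inv_mul_eq_div]

lemma det_sandwich_conj_diagonal {ι R : Type*} [Fintype ι] [DecidableEq ι] [CommRing R]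
    {P V : Matrix ι ι R} (hV : V ∈ orthogonalGroup ι R) (d : ι → R) :
    (P * (V * diagonal d * Vᵀ) * P).det = (P * P).det * ∏ i, d i := by
  rw [det_mul, det_mul, det_conj_of_mem_orthogonalGroup hV, det_diagonal, mul_right_comm,
    ← det_mul]

end Matrix

section ExtendByOne

variable {ι κ : Type*} {e : κ → ι}

lemma sum_log_extend_one [Fintype ι] [Fintype κ] (he : Injective e) (g : κ → ℝ) :
    ∑ i, Real.log (extend e g 1 i) = ∑ j, Real.log (g j) :=
  (Fintype.sum_of_injective e he _ _
    (fun i hi => by rw [extend_apply' _ _ _ hi, Pi.one_apply, Real.log_one])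
    (fun j => by rw [he.extend_apply])).symm

lemma extend_one_ne_zero {K : Type*} [Zero K] [One K] [NeZero (1 : K)] {g : κ → K}
    (hg : ∀ j, g j ≠ 0) (i : ι) : extend e g 1 i ≠ 0 := by
  classical
  rw [extend_def]
  split_ifs
  exacts [hg _, one_ne_zero]

lemma sum_div_extend_one {K : Type*} [Field K] [Fintype ι] [Fintype κ] (he : Injective e)
    (θ : ι → K) (hθ : ∀ j, θ (e j) ≠ 0) :
    ∑ i, θ i / extend e (θ ∘ e) 1 i = ∑ i, θ i + ∑ j, (1 - θ (e j)) := by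
  have hexcess : ∑ i, (θ i / extend e (θ ∘ e) 1 i - θ i) = ∑ j, (1 - θ (e j)) :=
    (Fintype.sum_of_injective e he _ _
      (fun i hi => by rw [extend_apply' _ _ _ hi, Pi.one_apply, div_one, sub_self])
      (fun j => by rw [he.extend_apply, Function.comp_apply, div_self (hθ j)])).symm
  rw [← hexcess, ← Finset.sum_add_distrib]
  simp only [add_sub_cancel]

lemma extend_sub_one_add_one {K : Type*} [AddGroup K] [One K] (he : Injective e) (θ : κ → K) :
    extend e (fun j => θ j - 1) 0 + 1 = extend e θ 1 := by
  funext i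
  by_cases hi : ∃ j, e j = i
  · obtain ⟨j, rfl⟩ := hi
    simp only [Pi.add_apply, he.extend_apply, Pi.one_apply, sub_add_cancel]
  · simp only [Pi.add_apply, extend_apply' _ _ _ hi, Pi.zero_apply, Pi.one_apply, zero_add]

end ExtendByOne

lemma loading_mul_transpose_add_sq {ι κ : Type*} [Fintype ι] [Fintype κ] [DecidableEq ι]
    [DecidableEq κ] {e : κ → ι} (he : Injective e) {Ψh V : Matrix ι ι ℝ} (hΨh : Ψhᵀ = Ψh)
    (hV : V ∈ orthogonalGroup ι ℝ) (θ : κ → ℝ) (hθ : ∀ j, 1 ≤ θ j) :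
    let Λ := Ψh * V.submatrix id e * diagonal (fun j => √(θ j - 1))
    Λ * Λᵀ + Ψh * Ψh = Ψh * (V * diagonal (extend e θ 1) * Vᵀ) * Ψh := by
  intro Λ
  have hΔsq : diagonal (fun j => √(θ j - 1)) * (diagonal fun j => √(θ j - 1))ᵀ
      = diagonal (fun j => θ j - 1) := by
    rw [diagonal_transpose, diagonal_mul_diagonal]
    exact congrArg diagonal (funext fun j => Real.mul_self_sqrt (by linarith [hθ j]))
  have hcore : V.submatrix id e * diagonal (fun j => θ j - 1) * (V.submatrix id e)ᵀ + 1
      = V * diagonal (extend e θ 1) * Vᵀ := by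
    rw [submatrix_mul_diagonal_mul_transpose V he, ← extend_sub_one_add_one he, Pi.add_def,
      ← diagonal_add, Pi.one_def, diagonal_one, Matrix.mul_add, Matrix.add_mul, Matrix.mul_one,
      (mem_orthogonalGroup_iff ι ℝ).mp hV]
  rw [← hcore, ← hΔsq]
  simp only [Λ, transpose_mul, hΨh, Matrix.mul_add, Matrix.add_mul, Matrix.mul_one,
    Matrix.mul_assoc]

theorem profile_Q_value_general {p q : ℕ} (hq : q < p)
    (Ψ Ψh S : Matrix (Fin p) (Fin p) ℝ)
    (hΨ : Ψ.PosDef)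
    (hΨh : Ψh.PosDef) (hΨhsq : Ψh * Ψh = Ψ)
    (G : Matrix (Fin p) (Fin p) ℝ) (hG : G = Ψh⁻¹ * S * Ψh⁻¹)
    (V : Matrix (Fin p) (Fin p) ℝ) (hV : V ∈ Matrix.orthogonalGroup (Fin p) ℝ)
    (θ : Fin p → ℝ)
    (hGeig : G = V * Matrix.diagonal θ * Vᵀ)
    (hθq : ∀ j : Fin q, 1 ≤ θ (Fin.castLE hq.le j))
    (V₁ : Matrix (Fin p) (Fin q) ℝ)
    (hV₁ : V₁ = Matrix.of fun i j => V i (Fin.castLE hq.le j))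
    (Δ : Matrix (Fin q) (Fin q) ℝ)
    (hΔ : Δ = Matrix.diagonal fun j => Real.sqrt (θ (Fin.castLE hq.le j) - 1))
    (Λhat : Matrix (Fin p) (Fin q) ℝ) (hΛhat : Λhat = Ψh * V₁ * Δ) :
    Real.log (Λhat * Λhatᵀ + Ψ).det + ((Λhat * Λhatᵀ + Ψ)⁻¹ * S).trace
      = Real.log Ψ.det + (Ψ⁻¹ * S).trace
        + ∑ j : Fin q, (Real.log (θ (Fin.castLE hq.le j))
            - θ (Fin.castLE hq.le j) + 1) := by
  set e := Fin.castLE hq.le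
  have he : Injective e := Fin.castLE_injective hq.le
  set d : Fin p → ℝ := extend e (θ ∘ e) 1
  have hθ_ne : ∀ j, θ (e j) ≠ 0 := fun j => by linarith [hθq j]
  have hd_ne : ∀ i, d i ≠ 0 := extend_one_ne_zero hθ_ne
  have hG' : Ψh⁻¹ * S * Ψh⁻¹ = V * diagonal θ * Vᵀ := hG ▸ hGeig
  have hcov : Λhat * Λhatᵀ + Ψ = Ψh * (V * diagonal d * Vᵀ) * Ψh := by
    have hΨhT : Ψhᵀ = Ψh := by
      simpa only [conjTranspose_eq_transpose_of_trivial] using hΨh.isHermitian.eq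
    rw [hΛhat, hV₁, hΔ, ← hΨhsq]
    exact loading_mul_transpose_add_sq he hΨhT hV (θ ∘ e) hθq
  have hΨ_eq : Ψ = Ψh * (V * diagonal (fun _ => 1) * Vᵀ) * Ψh := by
    rw [diagonal_one, Matrix.mul_one, (mem_orthogonalGroup_iff _ ℝ).mp hV, Matrix.mul_one, hΨhsq]
  have hlogdet : Real.log (Λhat * Λhatᵀ + Ψ).det = Real.log Ψ.det + ∑ j, Real.log (θ (e j)) := by
    rw [hcov, det_sandwich_conj_diagonal hV, hΨhsq,
      Real.log_mul hΨ.det_pos.ne' (Finset.prod_ne_zero_iff.mpr fun i _ => hd_ne i),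
      Real.log_prod (fun i _ => hd_ne i), sum_log_extend_one he]
    rfl
  have htrΨ : (Ψ⁻¹ * S).trace = ∑ i, θ i := by
    rw [hΨ_eq, trace_inv_sandwich_conj_diagonal_mul hV (fun _ => one_ne_zero) hG']
    simp only [div_one]
  rw [hlogdet, hcov, trace_inv_sandwich_conj_diagonal_mul hV hd_ne hG', htrΨ,
    sum_div_extend_one he θ hθ_ne]
  simp only [Finset.sum_add_distrib, Finset.sum_sub_distrib]
  ring

/-- Result 1 (profile value): if the `q` leading eigenvalues of
`G = Ψ^{-1/2} S Ψ^{-1/2}` are at least `1`, then at the optimal loading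
`Λ̂ = Ψ^{1/2} V₁ Δ` with `Δ = diag(√(θ_j − 1))`,
`log det(Λ̂Λ̂ᵀ + Ψ) + tr((Λ̂Λ̂ᵀ + Ψ)⁻¹ S)
  = log det Ψ + tr(Ψ⁻¹ S) + ∑_{j≤q} (log θ_j − θ_j + 1)`. -/
theorem profile_Q_value {p q : ℕ} (hq : q < p)
    (Ψ Ψh S : Matrix (Fin p) (Fin p) ℝ)
    (hΨ : Ψ.PosDef) (hΨdiag : Ψ.IsDiag)
    (hΨh : Ψh.PosDef) (hΨhsq : Ψh * Ψh = Ψ)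
    (hS : S.PosSemidef)
    (G : Matrix (Fin p) (Fin p) ℝ) (hG : G = Ψh⁻¹ * S * Ψh⁻¹)
    (V : Matrix (Fin p) (Fin p) ℝ) (hV : V ∈ Matrix.orthogonalGroup (Fin p) ℝ)
    (θ : Fin p → ℝ) (hθdec : Antitone θ)
    (hGeig : G = V * Matrix.diagonal θ * Vᵀ)
    (hθq : ∀ j : Fin q, 1 ≤ θ (Fin.castLE hq.le j))
    (V₁ : Matrix (Fin p) (Fin q) ℝ)
    (hV₁ : V₁ = Matrix.of fun i j => V i (Fin.castLE hq.le j))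
    (Δ : Matrix (Fin q) (Fin q) ℝ)
    (hΔ : Δ = Matrix.diagonal fun j => Real.sqrt (θ (Fin.castLE hq.le j) - 1))
    (Λhat : Matrix (Fin p) (Fin q) ℝ) (hΛhat : Λhat = Ψh * V₁ * Δ) :
    Real.log (Λhat * Λhatᵀ + Ψ).det + ((Λhat * Λhatᵀ + Ψ)⁻¹ * S).trace
      = Real.log Ψ.det + (Ψ⁻¹ * S).trace
        + ∑ j : Fin q, (Real.log (θ (Fin.castLE hq.le j))
            - θ (Fin.castLE hq.le j) + 1) :=
  profile_Q_value_general hq Ψ Ψh S hΨ hΨh hΨhsq G hG V hV θ hGeig hθq V₁ hV₁ Δ hΔ Λhat hΛhat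
end

section
/- Let Ψ be a p×p real positive definite diagonal matrix, V a p×p real orthogonal matrix with first q columns V₁ (q < p), θ : Fin p → ℝ, and Δ the q×q diagonal matrix with entries √(max(θ_j − 1, 0)). Then with Λ̂ = Ψ^{1/2} V₁ Δ, one has det(Λ̂Λ̂ᵀ + Ψ) = det(Ψ) · Π_{j=1}^{q} max(θ_j, 1). -/
/-!
Writing `Ψ = Ψ^{1/2} Ψ^{1/2}` with `Ψ^{1/2}` symmetric, the covariance factors as
`Ψ^{1/2} (L Lᵀ + 1) Ψ^{1/2}` with `L = V₁ Δ`, and Sylvester's identity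
`det (1 + L Lᵀ) = det (1 + Lᵀ L)` moves the problem to `q × q` matrices. Since the columns of `V₁`
are orthonormal, `Lᵀ L = Δ²` is diagonal with entries `max (θ_j - 1) 0`, and adding one gives
`max θ_j 1`.
-/

open Matrix

namespace Matrix

variable {m n R : Type*} [Fintype m] [DecidableEq m] [DecidableEq n] [CommRing R]

theorem det_mul_mul_transpose_add_mul_self [Fintype n] {S : Matrix m m R} (hS : Sᵀ = S)
    (L : Matrix m n R) :
    (S * L * (S * L)ᵀ + S * S).det = (S * S).det * (1 + Lᵀ * L).det := by
  have hfactor : S * L * (S * L)ᵀ + S * S = S * (1 + L * Lᵀ) * S := by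
    rw [transpose_mul, hS, Matrix.mul_add, Matrix.add_mul, Matrix.mul_one]
    simp only [Matrix.mul_assoc]
    abel
  rw [hfactor, det_mul, det_mul, det_mul, det_one_add_mul_comm]
  ring

theorem transpose_mul_self_submatrix_of_mem_orthogonalGroup {V : Matrix m m R}
    (hV : V ∈ orthogonalGroup m R) {f : n → m} (hf : Function.Injective f) :
    (V.submatrix id f)ᵀ * V.submatrix id f = 1 := by
  rw [transpose_submatrix, ← submatrix_mul _ _ _ _ _ Function.bijective_id,
    (mem_orthogonalGroup_iff' m R).mp hV, submatrix_one _ hf]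

end Matrix

theorem Real.one_add_sqrt_max_sub_one_sq (t : ℝ) : 1 + √(max (t - 1) 0) ^ 2 = max t 1 := by
  rw [Real.sq_sqrt (le_max_right _ _)]
  rcases le_total t 1 with h | h
  · rw [max_eq_right (by linarith), max_eq_right h, add_zero]
  · rw [max_eq_left (by linarith), max_eq_left h, add_sub_cancel]

theorem optimized_covariance_det_general {p q : ℕ} (hq : q < p)
    (Ψ Ψh : Matrix (Fin p) (Fin p) ℝ)
    (hΨh : Ψh.PosDef) (hΨhsq : Ψh * Ψh = Ψ)
    (V : Matrix (Fin p) (Fin p) ℝ) (hV : V ∈ Matrix.orthogonalGroup (Fin p) ℝ)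
    (θ : Fin p → ℝ)
    (V₁ : Matrix (Fin p) (Fin q) ℝ)
    (hV₁ : V₁ = Matrix.of fun i j => V i (Fin.castLE hq.le j))
    (Δ : Matrix (Fin q) (Fin q) ℝ)
    (hΔ : Δ = Matrix.diagonal fun j => Real.sqrt (max (θ (Fin.castLE hq.le j) - 1) 0))
    (Λhat : Matrix (Fin p) (Fin q) ℝ) (hΛhat : Λhat = Ψh * V₁ * Δ) :
    (Λhat * Λhatᵀ + Ψ).det = Ψ.det * ∏ j : Fin q, max (θ (Fin.castLE hq.le j)) 1 := by
  have hΨhT : Ψhᵀ = Ψh := by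
    simpa only [conjTranspose_eq_transpose_of_trivial] using hΨh.isHermitian.eq
  have hV₁_orth : V₁ᵀ * V₁ = 1 :=
    hV₁ ▸ transpose_mul_self_submatrix_of_mem_orthogonalGroup hV (Fin.castLE_injective hq.le)
  have hgram : (V₁ * Δ)ᵀ * (V₁ * Δ) = Δᵀ * Δ := by
    rw [transpose_mul, Matrix.mul_assoc, ← Matrix.mul_assoc V₁ᵀ, hV₁_orth, Matrix.one_mul]
  rw [hΛhat, ← hΨhsq, Matrix.mul_assoc Ψh V₁ Δ, det_mul_mul_transpose_add_mul_self hΨhT,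
    hgram, hΔ, diagonal_transpose, diagonal_mul_diagonal, ← diagonal_one, diagonal_add, det_diagonal]
  simp only [← sq, Real.one_add_sqrt_max_sub_one_sq]

/-- Determinant of the optimized factor-analytic covariance:
`det(Λ̂Λ̂ᵀ + Ψ) = det Ψ · ∏_{j≤q} max(θ_j, 1)` where `Λ̂ = Ψ^{1/2} V₁ Δ`. -/
theorem optimized_covariance_det {p q : ℕ} (hq : q < p)
    (Ψ Ψh : Matrix (Fin p) (Fin p) ℝ)
    (hΨ : Ψ.PosDef) (hΨdiag : Ψ.IsDiag)
    (hΨh : Ψh.PosDef) (hΨhsq : Ψh * Ψh = Ψ)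
    (V : Matrix (Fin p) (Fin p) ℝ) (hV : V ∈ Matrix.orthogonalGroup (Fin p) ℝ)
    (θ : Fin p → ℝ)
    (V₁ : Matrix (Fin p) (Fin q) ℝ)
    (hV₁ : V₁ = Matrix.of fun i j => V i (Fin.castLE hq.le j))
    (Δ : Matrix (Fin q) (Fin q) ℝ)
    (hΔ : Δ = Matrix.diagonal fun j => Real.sqrt (max (θ (Fin.castLE hq.le j) - 1) 0))
    (Λhat : Matrix (Fin p) (Fin q) ℝ) (hΛhat : Λhat = Ψh * V₁ * Δ) :
    (Λhat * Λhatᵀ + Ψ).det = Ψ.det * ∏ j : Fin q, max (θ (Fin.castLE hq.le j)) 1 :=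
  optimized_covariance_det_general hq Ψ Ψh hΨh hΨhsq V hV θ V₁ hV₁ Δ hΔ Λhat hΛhat
end
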